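/- Let Y = {(x,y) ∈ ℝ² : (x/a)² + y² = 1} be an ellipse of small eccentricity, meaning 1 < a ≤ √2, and let p ∈ Y. Then the distance function d_p : Y → ℝ, d_p(q) = d(p,q) (Euclidean distance), has exactly two local extrema: a global minimum at p and a global maximum at h⁻¹(p). Consequently, every nonempty intersection of Y with a Euclidean ball centered at a point of Y is either contractible or all of Y. -/

import Mathlib

/-!
Parametrize the ellipse by `θ ↦ (a cos θ, sin θ)`. The derivative of the squared distance from `p`
vanishes at `θ` exactly when the normal line at that point passes through `p`. For `1 < a² ≤ 2` the
second-intersection map `h` is injective (an explicit rational computation), so apart from `p` the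
only such point is `h⁻¹(p)`. By Rolle the distance is then injective, hence strictly monotone, on
each of the two arcs from `p` to `h⁻¹(p)` and back, which gives the extrema.

For a ball centred at `c ∈ Y` that misses some point of `Y`, it misses the farthest point `m` of `Y`
from `c`; as a critical point, `m` plays the role of `h⁻¹(c)`. Cutting `Y` at `m` identifies the
intersection with a sublevel set of a function on an interval that first decreases and then
increases, which is an interval and hence contractible.
-/


open Filter Topology Metric

noncomputable section

/-! ### The ellipse -/

/-- The point `(x, y)` of the Euclidean plane. -/
def pt2 (x y : ℝ) : EuclideanSpace ℝ (Fin 2) := (WithLp.equiv 2 (Fin 2 → ℝ)).symm ![x, y]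

/-- The ellipse `{(x,y) : (x/a)² + y² = 1}` in the Euclidean plane. -/
def ellipse (a : ℝ) : Set (EuclideanSpace ℝ (Fin 2)) :=
  {p | (p 0 / a) ^ 2 + (p 1) ^ 2 = 1}

/-- `r₁ = 4√3·a/(a²+3)`. -/
def ellipseR1 (a : ℝ) : ℝ := 4 * Real.sqrt 3 * a / (a ^ 2 + 3)

/-- `r₂ = 4√3·a²/(3a²+1)`. -/
def ellipseR2 (a : ℝ) : ℝ := 4 * Real.sqrt 3 * a ^ 2 / (3 * a ^ 2 + 1)

/-- A direction vector of the line normal to the ellipse `(x/a)² + y² = 1` at the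
point `p` (proportional to the gradient `(2x/a², 2y)` at `p`). -/
def normalDir (a : ℝ) (p : EuclideanSpace ℝ (Fin 2)) : EuclideanSpace ℝ (Fin 2) :=
  pt2 (p 0 / a ^ 2) (p 1)

open Real Set

local notation "ℝ²" => EuclideanSpace ℝ (Fin 2)

theorem injOn_Icc_of_hasDerivAt_ne_zero {f f' : ℝ → ℝ} {a b : ℝ} (hf : ContinuousOn f (Icc a b))
    (hd : ∀ x ∈ Ioo a b, HasDerivAt f (f' x) x) (h0 : ∀ x ∈ Ioo a b, f' x ≠ 0) :
    InjOn f (Icc a b) := by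
  intro x hx y hy hxy
  by_contra hne
  wlog hlt : x < y generalizing x y
  · exact this hy hx hxy.symm (Ne.symm hne) (lt_of_le_of_ne (not_lt.1 hlt) (Ne.symm hne))
  have hsub : Ioo x y ⊆ Ioo a b := Ioo_subset_Ioo hx.1 hy.2
  obtain ⟨c, hc, hc0⟩ := exists_hasDerivAt_eq_zero hlt (hf.mono (Icc_subset_Icc hx.1 hy.2)) hxy
    fun z hz => hd z (hsub hz)
  exact h0 c (hsub hc) hc0

theorem StrictMonoOn.not_isLocalMin {f : ℝ → ℝ} {a b t : ℝ} (hf : StrictMonoOn f (Icc a b))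
    (ht : t ∈ Ioc a b) : ¬IsLocalMin f t := by
  intro hmin
  obtain ⟨s, hs, hst⟩ := ((hmin.filter_mono nhdsWithin_le_nhds).and
    (Ioo_mem_nhdsLT ht.1)).exists
  exact (hf ⟨hst.1.le, hst.2.le.trans ht.2⟩ ⟨ht.1.le, ht.2⟩ hst.2).not_ge hs

theorem StrictMonoOn.not_isLocalMax {f : ℝ → ℝ} {a b t : ℝ} (hf : StrictMonoOn f (Icc a b))
    (ht : t ∈ Ico a b) : ¬IsLocalMax f t := by
  intro hmax
  obtain ⟨s, hs, hst⟩ := ((hmax.filter_mono nhdsWithin_le_nhds).and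
    (Ioo_mem_nhdsGT ht.2)).exists
  exact (hf ⟨ht.1, ht.2.le⟩ ⟨ht.1.trans hst.1.le, hst.2.le⟩ hst.1).not_ge hs

theorem StrictAntiOn.not_isLocalMin {f : ℝ → ℝ} {a b t : ℝ} (hf : StrictAntiOn f (Icc a b))
    (ht : t ∈ Ico a b) : ¬IsLocalMin f t :=
  fun hmin => hf.neg.not_isLocalMax ht hmin.neg

theorem StrictAntiOn.not_isLocalMax {f : ℝ → ℝ} {a b t : ℝ} (hf : StrictAntiOn f (Icc a b))
    (ht : t ∈ Ioc a b) : ¬IsLocalMax f t :=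
  fun hmax => hf.neg.not_isLocalMin ht hmax.neg

theorem quasiconvexOn_Icc_of_antitoneOn_of_monotoneOn {β : Type*} [Preorder β] {f : ℝ → β}
    {a m b : ℝ} (hanti : AntitoneOn f (Icc a m)) (hmono : MonotoneOn f (Icc m b)) :
    QuasiconvexOn ℝ (Icc a b) f := by
  refine fun r => convex_iff_ordConnected.2 ⟨fun x hx y hy t ht =>
    ⟨⟨hx.1.1.trans ht.1, ht.2.trans hy.1.2⟩, ?_⟩⟩
  rcases le_total t m with htm | hmt
  · exact (hanti ⟨hx.1.1, ht.1.trans htm⟩ ⟨hx.1.1.trans ht.1, htm⟩ ht.1).trans hx.2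
  · exact (hmono ⟨hmt, ht.2.trans hy.1.2⟩ ⟨hmt.trans ht.2, hy.1.2⟩ ht.2).trans hy.2

/-- On `x² + c y² = c`, the abscissa of the second intersection of the normal at a point with
abscissa `x` is `x ((c - 1)² x² + c² (2 - c)) / (c³ - (c² - 1) x²)`; it determines `x`. -/
theorem eq_of_second_intersection_fst_eq {c x y : ℝ} (hc1 : 1 < c) (hc2 : c ≤ 2)
    (hx : x ^ 2 ≤ c) (hy : y ^ 2 ≤ c)
    (h : x * ((c - 1) ^ 2 * x ^ 2 + c ^ 2 * (2 - c)) * (c ^ 3 - (c ^ 2 - 1) * y ^ 2)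
      = y * ((c - 1) ^ 2 * y ^ 2 + c ^ 2 * (2 - c)) * (c ^ 3 - (c ^ 2 - 1) * x ^ 2)) :
    x = y := by
  by_contra hne
  set s := (x ^ 2 + y ^ 2) / 2 with hs_def
  have hs : 0 < s := by
    have : 0 < (x - y) ^ 2 := by positivity
    rw [hs_def]; nlinarith [sq_nonneg (x + y)]
  -- after cancelling `x - y`, a sum of nonnegative terms one of which is `s * c > 0`
  have hQ : (x - y) * ((c - 1) ^ 3 * (c + 1) * (c * s - x ^ 2 * y ^ 2) + (c - s) * c ^ 4 * (2 - c)
      + s * c + (x + y) ^ 2 / 2 * (c ^ 3 * (c - 1) ^ 2 + c ^ 2 * (2 - c) * (c ^ 2 - 1))) = 0 := by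
    linear_combination h
  have hxy : x ^ 2 * y ^ 2 ≤ c * s := by
    nlinarith [mul_nonneg (sub_nonneg.2 hx) (sq_nonneg y),
      mul_nonneg (sub_nonneg.2 hy) (sq_nonneg x), hs_def]
  have : 0 < (c - 1) ^ 3 * (c + 1) * (c * s - x ^ 2 * y ^ 2) + (c - s) * c ^ 4 * (2 - c)
      + s * c + (x + y) ^ 2 / 2 * (c ^ 3 * (c - 1) ^ 2 + c ^ 2 * (2 - c) * (c ^ 2 - 1)) := by
    have h1 : 0 ≤ c - 1 := by linarith
    have h2 : 0 ≤ 2 - c := by linarith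
    have h3 : 0 ≤ c - s := by linarith [hs_def]
    have h4 : 0 ≤ c ^ 2 - 1 := by nlinarith
    have h5 : 0 ≤ c * s - x ^ 2 * y ^ 2 := by linarith
    positivity
  exact (mul_ne_zero (sub_ne_zero.2 hne) this.ne') hQ

theorem normal_second_intersection_eq {c X Y t : ℝ} (hc : c ≠ 0) (hz : X ^ 2 + c * Y ^ 2 = c)
    (hw : (X + t * (X / c)) ^ 2 + c * (Y + t * Y) ^ 2 = c) (ht : t ≠ 0) :
    (X + t * (X / c)) * (X ^ 2 + c ^ 3 * Y ^ 2) = -X * (X ^ 2 + c ^ 2 * (2 - c) * Y ^ 2) ∧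
    (Y + t * Y) * (X ^ 2 + c ^ 3 * Y ^ 2) = -Y * ((2 * c - 1) * X ^ 2 + c ^ 3 * Y ^ 2) := by
  -- `t = 0` is the point `(X, Y)` itself; the other root gives the second intersection
  have hquad : t * (t * (X ^ 2 + c ^ 3 * Y ^ 2) + 2 * c * (X ^ 2 + c ^ 2 * Y ^ 2)) = 0 := by
    field_simp at hw
    linear_combination hw - c ^ 2 * hz
  have ht' := (mul_eq_zero.1 hquad).resolve_left ht
  constructor
  · field_simp
    linear_combination X * ht'
  · linear_combination Y * ht'

theorem eq_of_second_intersection_eq {c P V X Y X' Y' : ℝ} (hc1 : 1 < c) (hc2 : c ≤ 2)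
    (hz : X ^ 2 + c * Y ^ 2 = c) (hz' : X' ^ 2 + c * Y' ^ 2 = c)
    (hP : P * (X ^ 2 + c ^ 3 * Y ^ 2) = -X * (X ^ 2 + c ^ 2 * (2 - c) * Y ^ 2))
    (hV : V * (X ^ 2 + c ^ 3 * Y ^ 2) = -Y * ((2 * c - 1) * X ^ 2 + c ^ 3 * Y ^ 2))
    (hP' : P * (X' ^ 2 + c ^ 3 * Y' ^ 2) = -X' * (X' ^ 2 + c ^ 2 * (2 - c) * Y' ^ 2))
    (hV' : V * (X' ^ 2 + c ^ 3 * Y' ^ 2) = -Y' * ((2 * c - 1) * X' ^ 2 + c ^ 3 * Y' ^ 2)) :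
    X = X' ∧ Y = Y' := by
  have hc0 : 0 < c := by linarith
  have hX : X = X' := by
    -- eliminate `Y²` using the ellipse equation
    have e : P * (c ^ 3 - (c ^ 2 - 1) * X ^ 2) = -X * ((c - 1) ^ 2 * X ^ 2 + c ^ 2 * (2 - c)) := by
      linear_combination hP - (c ^ 2 * P + c * (2 - c) * X) * hz
    have e' : P * (c ^ 3 - (c ^ 2 - 1) * X' ^ 2) =
        -X' * ((c - 1) ^ 2 * X' ^ 2 + c ^ 2 * (2 - c)) := by
      linear_combination hP' - (c ^ 2 * P + c * (2 - c) * X') * hz'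
    refine eq_of_second_intersection_fst_eq hc1 hc2 (by nlinarith [sq_nonneg Y])
      (by nlinarith [sq_nonneg Y']) ?_
    linear_combination (c ^ 3 - (c ^ 2 - 1) * X' ^ 2) * e - (c ^ 3 - (c ^ 2 - 1) * X ^ 2) * e'
  subst hX
  have hY : Y ^ 2 = Y' ^ 2 := by nlinarith
  refine ⟨rfl, ?_⟩
  rcases sq_eq_sq_iff_eq_or_eq_neg.1 hY with h | rfl
  · exact h
  have hW : Y' * ((2 * c - 1) * X ^ 2 + c ^ 3 * Y' ^ 2) = 0 := by linear_combination (hV' - hV) / 2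
  have hY0 : Y' = 0 := by
    rcases mul_eq_zero.1 hW with h0 | h0
    · exact h0
    · have h2 : c ^ 3 * Y' ^ 2 = 0 := by
        nlinarith [mul_nonneg (by linarith : (0 : ℝ) ≤ 2 * c - 1) (sq_nonneg X),
          mul_nonneg (pow_pos hc0 3).le (sq_nonneg Y')]
      simpa [hc0.ne'] using h2
  simp [hY0]

@[simp] theorem pt2_apply_zero (x y : ℝ) : pt2 x y 0 = x := rfl

@[simp] theorem pt2_apply_one (x y : ℝ) : pt2 x y 1 = y := rfl

theorem ext_fin_two {p q : ℝ²} (h0 : p 0 = q 0) (h1 : p 1 = q 1) : p = q := by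
  ext i; fin_cases i <;> assumption

theorem mem_ellipse_iff {a : ℝ} (ha : a ≠ 0) {q : ℝ²} :
    q ∈ ellipse a ↔ q 0 ^ 2 + a ^ 2 * q 1 ^ 2 = a ^ 2 := by
  simp only [ellipse, mem_ofPred_eq, div_pow]
  constructor <;> intro h <;> field_simp at * <;> linarith

def OnNormal (a : ℝ) (z w : ℝ²) : Prop := ∃ t : ℝ, w = z + t • normalDir a z

theorem OnNormal.second_intersection_eq {a : ℝ} (ha : a ≠ 0) {z w : ℝ²} (hz : z ∈ ellipse a)
    (hw : w ∈ ellipse a) (hzw : z ≠ w) (h : OnNormal a z w) :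
    w 0 * (z 0 ^ 2 + (a ^ 2) ^ 3 * z 1 ^ 2) =
        -z 0 * (z 0 ^ 2 + (a ^ 2) ^ 2 * (2 - a ^ 2) * z 1 ^ 2) ∧
      w 1 * (z 0 ^ 2 + (a ^ 2) ^ 3 * z 1 ^ 2) =
        -z 1 * ((2 * a ^ 2 - 1) * z 0 ^ 2 + (a ^ 2) ^ 3 * z 1 ^ 2) := by
  obtain ⟨t, rfl⟩ := h
  have ht : t ≠ 0 := by rintro rfl; simp at hzw
  rw [mem_ellipse_iff ha] at hz hw
  simpa [normalDir] using
    normal_second_intersection_eq (pow_ne_zero 2 ha) hz (by simpa [normalDir] using hw) ht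

theorem eq_of_onNormal {a : ℝ} (ha1 : 1 < a) (ha2 : a ^ 2 ≤ 2) {w z z' : ℝ²}
    (hw : w ∈ ellipse a) (hz : z ∈ ellipse a) (hz' : z' ∈ ellipse a)
    (hzw : z ≠ w) (hz'w : z' ≠ w) (h : OnNormal a z w) (h' : OnNormal a z' w) : z = z' := by
  have ha : a ≠ 0 := by positivity
  obtain ⟨hP, hV⟩ := h.second_intersection_eq ha hz hw hzw
  obtain ⟨hP', hV'⟩ := h'.second_intersection_eq ha hz' hw hz'w
  rw [mem_ellipse_iff ha] at hz hz'
  obtain ⟨h0, h1⟩ := eq_of_second_intersection_eq (by nlinarith) ha2 hz hz' hP hV hP' hV'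
  exact ext_fin_two h0 h1

def ellipseParam (a θ : ℝ) : ℝ² := pt2 (a * cos θ) (sin θ)

theorem ellipseParam_mem {a : ℝ} (ha : a ≠ 0) (θ : ℝ) : ellipseParam a θ ∈ ellipse a := by
  simp [ellipse, ellipseParam, ha]

theorem continuous_ellipseParam (a : ℝ) : Continuous (ellipseParam a) := by
  refine (PiLp.continuous_toLp 2 _).comp (continuous_pi fun i => ?_)
  fin_cases i
  · exact continuous_const.mul continuous_cos
  · exact continuous_sin

theorem ellipseParam_periodic (a : ℝ) : Function.Periodic (ellipseParam a) (2 * π) := by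
  intro θ
  simp [ellipseParam]

theorem dist_ellipseParam_sq (a : ℝ) (w : ℝ²) (θ : ℝ) :
    dist w (ellipseParam a θ) ^ 2 = (w 0 - a * cos θ) ^ 2 + (w 1 - sin θ) ^ 2 := by
  rw [EuclideanSpace.dist_eq, sq_sqrt (by positivity), Fin.sum_univ_two]
  simp [ellipseParam, Real.dist_eq, sq_abs]

theorem hasDerivAt_dist_ellipseParam_sq (a : ℝ) (w : ℝ²) (θ : ℝ) :
    HasDerivAt (fun θ => dist w (ellipseParam a θ) ^ 2)
      (2 * (a * sin θ * (w 0 - a * cos θ) - cos θ * (w 1 - sin θ))) θ := by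
  simp only [dist_ellipseParam_sq]
  have h0 := ((hasDerivAt_cos θ).const_mul a).const_sub (w 0) |>.pow 2
  have h1 := (hasDerivAt_sin θ).const_sub (w 1) |>.pow 2
  exact (h0.add h1).congr_deriv (by ring)

theorem onNormal_ellipseParam {a : ℝ} (ha : a ≠ 0) {w : ℝ²} {θ : ℝ}
    (h : a * sin θ * (w 0 - a * cos θ) - cos θ * (w 1 - sin θ) = 0) :
    OnNormal a (ellipseParam a θ) w := by
  refine ⟨a * cos θ * (w 0 - a * cos θ) + sin θ * (w 1 - sin θ), ext_fin_two ?_ ?_⟩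
    <;> simp only [PiLp.add_apply, PiLp.smul_apply, smul_eq_mul, normalDir, ellipseParam,
      pt2_apply_zero, pt2_apply_one]
  · field_simp
    linear_combination sin θ * h - a * (w 0 - a * cos θ) * sin_sq_add_cos_sq θ
  · linear_combination -cos θ * h - (w 1 - sin θ) * sin_sq_add_cos_sq θ

def ellipseToCircle (a : ℝ) (q : ℝ²) : ℂ := (q 0 / a : ℝ) + q 1 * Complex.I

theorem continuous_ellipseToCircle (a : ℝ) : Continuous (ellipseToCircle a) := by
  unfold ellipseToCircle; fun_prop

theorem norm_ellipseToCircle {a : ℝ} {q : ℝ²} (hq : q ∈ ellipse a) : ‖ellipseToCircle a q‖ = 1 := by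
  have h : (q 0 / a) ^ 2 + q 1 ^ 2 = 1 := hq
  rw [Complex.norm_def, Complex.normSq_apply]
  simp [ellipseToCircle, ← sq, h]

theorem ellipseToCircle_ellipseParam {a : ℝ} (ha : a ≠ 0) (θ : ℝ) :
    ellipseToCircle a (ellipseParam a θ) = Complex.exp (θ * Complex.I) := by
  apply Complex.ext <;> simp [ellipseToCircle, ellipseParam, Complex.exp_ofReal_mul_I_re,
    Complex.exp_ofReal_mul_I_im, Complex.cos_ofReal_re, Complex.sin_ofReal_re, ha]

theorem ellipseParam_eq_of_exp_eq {a : ℝ} (ha : a ≠ 0) {θ : ℝ} {q : ℝ²}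
    (h : Complex.exp (θ * Complex.I) = ellipseToCircle a q) : ellipseParam a θ = q := by
  have hre := congrArg Complex.re h
  have him := congrArg Complex.im h
  simp only [Complex.exp_ofReal_mul_I_re, Complex.exp_ofReal_mul_I_im] at hre him
  simp [ellipseToCircle] at hre him
  refine ext_fin_two ?_ him
  simp [ellipseParam, hre, mul_div_cancel₀ _ ha]

/-- The lift `q ↦ θ ∈ (β, β + 2π]` with `ellipseParam a θ = q`: rotating by `-(β + π)` moves the
branch cut of `arg` to `ellipseParam a β`. -/
def ellipseAngle (a β : ℝ) (q : ℝ²) : ℝ :=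
  β + π + Complex.arg (ellipseToCircle a q * Complex.exp (↑(-(β + π)) * Complex.I))

theorem ellipseAngle_mem_Ioc (a β : ℝ) (q : ℝ²) : ellipseAngle a β q ∈ Ioc β (β + 2 * π) := by
  have := Complex.arg_mem_Ioc (ellipseToCircle a q * Complex.exp (↑(-(β + π)) * Complex.I))
  constructor <;> simp only [ellipseAngle] <;> linarith [this.1, this.2]

theorem ellipseParam_ellipseAngle {a : ℝ} (ha : a ≠ 0) (β : ℝ) {q : ℝ²} (hq : q ∈ ellipse a) :
    ellipseParam a (ellipseAngle a β q) = q := by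
  apply ellipseParam_eq_of_exp_eq ha
  set z := ellipseToCircle a q * Complex.exp (↑(-(β + π)) * Complex.I) with hz_def
  have hz : Complex.exp (z.arg * Complex.I) = z := by
    have hnorm : ‖z‖ = 1 := by
      rw [norm_mul, norm_ellipseToCircle hq, Complex.norm_exp_ofReal_mul_I, one_mul]
    simpa [hnorm] using Complex.norm_mul_exp_arg_mul_I z
  calc Complex.exp (↑(ellipseAngle a β q) * Complex.I)
      = Complex.exp (↑(β + π) * Complex.I) * Complex.exp (z.arg * Complex.I) := by
        rw [← Complex.exp_add, ellipseAngle, ← hz_def]; push_cast; ring_nf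
    _ = ellipseToCircle a q * Complex.exp (↑(β + π) * Complex.I + ↑(-(β + π)) * Complex.I) := by
        rw [hz, hz_def, Complex.exp_add]; ring
    _ = ellipseToCircle a q := by push_cast; ring_nf; simp

theorem ellipseAngle_ellipseParam {a : ℝ} (ha : a ≠ 0) {β θ : ℝ} (hθ : θ ∈ Ioc β (β + 2 * π)) :
    ellipseAngle a β (ellipseParam a θ) = θ := by
  rw [ellipseAngle, ellipseToCircle_ellipseParam ha, ← Complex.exp_add, ← add_mul,
    ← Complex.ofReal_add, Complex.arg_exp_mul_I, (toIocMod_eq_self two_pi_pos).2]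
  · ring
  · constructor <;> linarith [hθ.1, hθ.2]

theorem continuousAt_ellipseAngle {a : ℝ} (ha : a ≠ 0) {β : ℝ} {q : ℝ²} (hq : q ∈ ellipse a)
    (hne : q ≠ ellipseParam a β) : ContinuousAt (ellipseAngle a β) q := by
  set z := ellipseToCircle a q * Complex.exp (↑(-(β + π)) * Complex.I)
  have hz : z ∈ Complex.slitPlane := by
    refine Complex.mem_slitPlane_iff_arg.2 ⟨fun hπ => hne ?_, fun h0 => ?_⟩
    · have hθ : ellipseAngle a β q = β + 2 * π := by rw [ellipseAngle, hπ]; ring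
      rw [← ellipseParam_ellipseAngle ha β hq, hθ, ellipseParam_periodic]
    · have := congrArg norm h0
      rw [norm_mul, norm_ellipseToCircle hq, Complex.norm_exp_ofReal_mul_I] at this
      norm_num at this
  have hz' : ContinuousAt Complex.arg z := Complex.continuousAt_arg hz
  have hf : Continuous fun q => ellipseToCircle a q * Complex.exp (↑(-(β + π)) * Complex.I) :=
    (continuous_ellipseToCircle a).mul continuous_const
  exact continuousAt_const.add (ContinuousAt.comp (g := Complex.arg) (x := q) hz' hf.continuousAt)

theorem ellipseParam_injOn {a : ℝ} (ha : a ≠ 0) (β : ℝ) :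
    InjOn (ellipseParam a) (Ioc β (β + 2 * π)) :=
  LeftInvOn.injOn fun _ hθ => ellipseAngle_ellipseParam ha hθ

theorem exists_window {a : ℝ} (ha1 : 1 < a) (ha2 : a ^ 2 ≤ 2) {w z : ℝ²} (hw : w ∈ ellipse a)
    (hz : z ∈ ellipse a) (hzw : z ≠ w) (h : OnNormal a z w) :
    ∃ α β, ellipseParam a α = w ∧ ellipseParam a β = z ∧ β ∈ Ioo α (α + 2 * π) ∧
      StrictMonoOn (fun θ => dist w (ellipseParam a θ)) (Icc α β) ∧
      StrictAntiOn (fun θ => dist w (ellipseParam a θ)) (Icc β (α + 2 * π)) := by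
  have ha : a ≠ 0 := by positivity
  set α := ellipseAngle a 0 w
  set β := ellipseAngle a α z
  have hα : ellipseParam a α = w := ellipseParam_ellipseAngle ha 0 hw
  have hα' : ellipseParam a (α + 2 * π) = w := by rw [ellipseParam_periodic, hα]
  have hβ : ellipseParam a β = z := ellipseParam_ellipseAngle ha α hz
  have hβmem : β ∈ Ioc α (α + 2 * π) := ellipseAngle_mem_Ioc a α z
  have hαmem : α + 2 * π ∈ Ioc α (α + 2 * π) := ⟨by linarith [pi_pos], le_rfl⟩
  have hβ2π : β < α + 2 * π := hβmem.2.lt_of_ne fun h => hzw (by rw [← hβ, h, hα'])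
  -- up to the factor `2`, this is the derivative of the squared distance
  have hcrit : ∀ θ ∈ Ioo α (α + 2 * π), θ ≠ β →
      a * sin θ * (w 0 - a * cos θ) - cos θ * (w 1 - sin θ) ≠ 0 := by
    intro θ hθ hθβ hcrit
    have hθw : ellipseParam a θ ≠ w := fun h' =>
      hθ.2.ne (ellipseParam_injOn ha α (Ioo_subset_Ioc_self hθ) hαmem (h'.trans hα'.symm))
    exact hθβ (ellipseParam_injOn ha α (Ioo_subset_Ioc_self hθ) hβmem
      ((eq_of_onNormal ha1 ha2 hw (ellipseParam_mem ha θ) hz hθw hzw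
        (onNormal_ellipseParam ha hcrit) h).trans hβ.symm))
  have hcont : Continuous fun θ => dist w (ellipseParam a θ) :=
    continuous_const.dist (continuous_ellipseParam a)
  have hinj : ∀ {x y}, Ioo x y ⊆ Ioo α (α + 2 * π) → β ∉ Ioo x y →
      InjOn (fun θ => dist w (ellipseParam a θ)) (Icc x y) := by
    intro x y hxy hβxy
    refine InjOn.of_comp (g := fun d => d ^ 2) (injOn_Icc_of_hasDerivAt_ne_zero
      ((continuous_pow 2).comp hcont).continuousOn
      (fun θ _ => hasDerivAt_dist_ellipseParam_sq a w θ) fun θ hθ => ?_)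
    exact mul_ne_zero two_ne_zero (hcrit θ (hxy hθ) fun h' => hβxy (h' ▸ hθ))
  refine ⟨α, β, hα, hβ, ⟨hβmem.1, hβ2π⟩, ?_, ?_⟩
  · exact hcont.continuousOn.strictMonoOn_of_injOn_Icc hβmem.1.le (by simp [hα])
      (hinj (Ioo_subset_Ioo_right hβ2π.le) fun h' => h'.2.false)
  · exact hcont.continuousOn.strictAntiOn_of_injOn_Icc hβ2π.le (by simp [hα'])
      (hinj (Ioo_subset_Ioo_left hβmem.1.le) fun h' => h'.1.false)

theorem IsLocalMin.comp_ellipseParam {a : ℝ} (ha : a ≠ 0) {f : ellipse a → ℝ} {q : ellipse a}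
    (hf : IsLocalMin f q) {θ : ℝ} (hθ : ellipseParam a θ = q) :
    IsLocalMin (fun θ => f ⟨ellipseParam a θ, ellipseParam_mem ha θ⟩) θ := by
  obtain rfl : q = ⟨ellipseParam a θ, ellipseParam_mem ha θ⟩ := Subtype.ext hθ.symm
  exact hf.comp_continuous (g := fun θ => (⟨ellipseParam a θ, ellipseParam_mem ha θ⟩ : ellipse a))
    ((continuous_ellipseParam a).subtype_mk _).continuousAt

theorem IsLocalMax.comp_ellipseParam {a : ℝ} (ha : a ≠ 0) {f : ellipse a → ℝ} {q : ellipse a}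
    (hf : IsLocalMax f q) {θ : ℝ} (hθ : ellipseParam a θ = q) :
    IsLocalMax (fun θ => f ⟨ellipseParam a θ, ellipseParam_mem ha θ⟩) θ := by
  obtain rfl : q = ⟨ellipseParam a θ, ellipseParam_mem ha θ⟩ := Subtype.ext hθ.symm
  exact hf.comp_continuous (g := fun θ => (⟨ellipseParam a θ, ellipseParam_mem ha θ⟩ : ellipse a))
    ((continuous_ellipseParam a).subtype_mk _).continuousAt

theorem dist_le_of_onNormal {a : ℝ} (ha1 : 1 < a) (ha2 : a ^ 2 ≤ 2) {w z q : ℝ²}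
    (hw : w ∈ ellipse a) (hz : z ∈ ellipse a) (hzw : z ≠ w) (h : OnNormal a z w)
    (hq : q ∈ ellipse a) : dist w q ≤ dist w z := by
  have ha : a ≠ 0 := by positivity
  obtain ⟨α, β, -, hβ, hβmem, hmono, hanti⟩ := exists_window ha1 ha2 hw hz hzw h
  have hθ := ellipseAngle_mem_Ioc a α q
  rw [← ellipseParam_ellipseAngle ha α hq, ← hβ]
  rcases le_total (ellipseAngle a α q) β with hle | hge
  · exact hmono.monotoneOn ⟨hθ.1.le, hle⟩ ⟨hβmem.1.le, le_rfl⟩ hle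
  · exact hanti.antitoneOn ⟨le_rfl, hβmem.2.le⟩ ⟨hge, hθ.2⟩ hge

theorem eq_of_isLocalMin_dist {a : ℝ} (ha1 : 1 < a) (ha2 : a ^ 2 ≤ 2) {w z : ℝ²}
    (hw : w ∈ ellipse a) (hz : z ∈ ellipse a) (hzw : z ≠ w) (h : OnNormal a z w)
    {q : ellipse a} (hmin : IsLocalMin (fun x : ellipse a => dist w x) q) : (q : ℝ²) = w := by
  have ha : a ≠ 0 := by positivity
  obtain ⟨α, β, hα, -, hβmem, hmono, hanti⟩ := exists_window ha1 ha2 hw hz hzw h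
  set θ := ellipseAngle a α q
  have hθ : θ ∈ Ioc α (α + 2 * π) := ellipseAngle_mem_Ioc a α q
  have hq : ellipseParam a θ = q := ellipseParam_ellipseAngle ha α q.2
  have hminθ := hmin.comp_ellipseParam ha hq
  rcases hθ.2.eq_or_lt with hθα | hθα
  · rw [← hq, hθα, ellipseParam_periodic, hα]
  rcases le_or_gt θ β with hθβ | hθβ
  · exact absurd hminθ (hmono.not_isLocalMin ⟨hθ.1, hθβ⟩)
  · exact absurd hminθ (hanti.not_isLocalMin ⟨hθβ.le, hθα⟩)

theorem eq_of_isLocalMax_dist {a : ℝ} (ha1 : 1 < a) (ha2 : a ^ 2 ≤ 2) {w z : ℝ²}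
    (hw : w ∈ ellipse a) (hz : z ∈ ellipse a) (hzw : z ≠ w) (h : OnNormal a z w)
    {q : ellipse a} (hmax : IsLocalMax (fun x : ellipse a => dist w x) q) : (q : ℝ²) = z := by
  have ha : a ≠ 0 := by positivity
  obtain ⟨α, β, -, hβ, hβmem, hmono, hanti⟩ := exists_window ha1 ha2 hw hz hzw h
  set θ := ellipseAngle a α q
  have hθ : θ ∈ Ioc α (α + 2 * π) := ellipseAngle_mem_Ioc a α q
  have hq : ellipseParam a θ = q := ellipseParam_ellipseAngle ha α q.2
  have hmaxθ := hmax.comp_ellipseParam ha hq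
  rcases lt_trichotomy θ β with hθβ | hθβ | hθβ
  · exact absurd hmaxθ (hmono.not_isLocalMax ⟨hθ.1.le, hθβ⟩)
  · rw [← hq, hθβ, hβ]
  · exact absurd hmaxθ (hanti.not_isLocalMax ⟨hθβ, hθ.2⟩)

theorem exists_onNormal_farthest {a : ℝ} (ha : a ≠ 0) (c : ℝ²) :
    ∃ θ, OnNormal a (ellipseParam a θ) c ∧
      ∀ q ∈ ellipse a, dist c q ≤ dist c (ellipseParam a θ) := by
  obtain ⟨_, ⟨θ, rfl⟩, hmax⟩ := ((ellipseParam_periodic a).compact_of_continuous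
    two_pi_pos.ne' (continuous_ellipseParam a)).exists_isMaxOn (range_nonempty _)
    (continuous_const.dist continuous_id).continuousOn
  have hfar : ∀ q ∈ ellipse a, dist c q ≤ dist c (ellipseParam a θ) := fun q hq =>
    isMaxOn_iff.1 hmax q ⟨_, ellipseParam_ellipseAngle ha 0 hq⟩
  refine ⟨θ, onNormal_ellipseParam ha ?_, hfar⟩
  have hloc : IsLocalMax (fun θ => dist c (ellipseParam a θ) ^ 2) θ :=
    Eventually.of_forall fun θ' => pow_le_pow_left₀ dist_nonneg (hfar _ (ellipseParam_mem ha θ')) 2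
  linarith [hloc.hasDerivAt_eq_zero (hasDerivAt_dist_ellipseParam_sq a c θ)]

def ellipseInterBallHomeomorph {a : ℝ} (ha : a ≠ 0) (β : ℝ) {c : ℝ²} {ρ : ℝ}
    (hβ : ellipseParam a β ∉ ball c ρ) :
    ↥(ellipse a ∩ ball c ρ) ≃ₜ ↥{θ ∈ Icc β (β + 2 * π) | ellipseParam a θ ∈ ball c ρ} where
  toFun q := ⟨ellipseAngle a β q, Ioc_subset_Icc_self (ellipseAngle_mem_Ioc a β q),
    (ellipseParam_ellipseAngle ha β q.2.1).symm ▸ q.2.2⟩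
  invFun θ := ⟨ellipseParam a θ, ellipseParam_mem ha θ, θ.2.2⟩
  left_inv q := Subtype.ext (ellipseParam_ellipseAngle ha β q.2.1)
  right_inv θ := Subtype.ext (ellipseAngle_ellipseParam ha
    ⟨θ.2.1.1.lt_of_ne fun h => hβ (h ▸ θ.2.2), θ.2.1.2⟩)
  continuous_toFun := by
    refine Continuous.subtype_mk (continuous_iff_continuousAt.2 fun q => ?_) _
    exact (continuousAt_ellipseAngle ha q.2.1 fun h => hβ (h ▸ q.2.2)).comp
      continuous_subtype_val.continuousAt
  continuous_invFun := ((continuous_ellipseParam a).comp continuous_subtype_val).subtype_mk _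

theorem contractibleSpace_inter_ball {a : ℝ} (ha1 : 1 < a) (ha2 : a ^ 2 ≤ 2) {c : ℝ²}
    (hc : c ∈ ellipse a) {ρ : ℝ} (hne : (ellipse a ∩ ball c ρ).Nonempty)
    (hsub : ¬ellipse a ⊆ ball c ρ) : ContractibleSpace ↥(ellipse a ∩ ball c ρ) := by
  have ha : a ≠ 0 := by positivity
  obtain ⟨θm, hnormal, hfar⟩ := exists_onNormal_farthest ha c
  obtain ⟨q, hq, hqρ⟩ := not_subset.1 hsub
  have hmρ : ellipseParam a θm ∉ ball c ρ := fun hm =>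
    hqρ (mem_ball'.2 ((hfar q hq).trans_lt (mem_ball'.1 hm)))
  have hmc : ellipseParam a θm ≠ c := fun h =>
    hmρ (h ▸ mem_ball_self (nonempty_ball.1 (hne.mono inter_subset_right)))
  obtain ⟨α, β, -, hβ, hβmem, hmono, hanti⟩ :=
    exists_window ha1 ha2 hc (ellipseParam_mem ha θm) hmc hnormal
  rw [← hβ] at hmρ
  have hmono' : MonotoneOn (fun θ => dist c (ellipseParam a θ)) (Icc (α + 2 * π) (β + 2 * π)) := by
    intro x hx y hy hxy
    have := hmono.monotoneOn ⟨by linarith [hx.1], by linarith [hx.2]⟩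
      ⟨by linarith [hy.1], by linarith [hy.2]⟩ (sub_le_sub_right hxy (2 * π))
    simpa only [(ellipseParam_periodic a).sub_eq] using this
  have hconv : Convex ℝ {θ ∈ Icc β (β + 2 * π) | ellipseParam a θ ∈ ball c ρ} := by
    simpa only [mem_ball'] using
      (quasiconvexOn_Icc_of_antitoneOn_of_monotoneOn hanti.antitoneOn hmono').convex_lt ρ
  let e := ellipseInterBallHomeomorph ha β hmρ
  have := hconv.contractibleSpace ⟨e ⟨_, hne.some_mem⟩, (e ⟨_, hne.some_mem⟩).2⟩
  exact e.contractibleSpace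

/-- **Extrema of the distance function on a small-eccentricity ellipse**
(Adamaszek–Adams–Reddy, Lemma 6.5). Let `Y` be an ellipse of small eccentricity
(`1 < a ≤ √2`) and `p ∈ Y`. The only local extrema of `d_p : Y → ℝ` are a global
minimum at `p` and a global maximum at `h⁻¹(p)`. Consequently every nonempty
intersection of `Y` with a Euclidean ball centered at a point of `Y` is either
contractible or all of `Y`. -/
theorem ellipse_dist_extrema (a : ℝ) (ha1 : 1 < a) (ha2 : a ≤ Real.sqrt 2)
    (h : ↥(ellipse a) → ↥(ellipse a))
    (hh : ∀ z : ↥(ellipse a), h z ≠ z ∧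
      ∃ t : ℝ, ((h z : EuclideanSpace ℝ (Fin 2))) = ↑z + t • normalDir a ↑z)
    (p q0 : ↥(ellipse a)) (hq0 : h q0 = p) :
    ((∀ q : ↥(ellipse a), dist p p ≤ dist p q) ∧
     (∀ q : ↥(ellipse a), dist p q ≤ dist p q0) ∧
     (∀ q : ↥(ellipse a), IsLocalMin (fun z : ↥(ellipse a) => dist p z) q → q = p) ∧
     (∀ q : ↥(ellipse a), IsLocalMax (fun z : ↥(ellipse a) => dist p z) q → q = q0)) ∧
    (∀ (c : EuclideanSpace ℝ (Fin 2)) (ρ : ℝ), c ∈ ellipse a →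
      (ellipse a ∩ Metric.ball c ρ).Nonempty →
      ContractibleSpace ↥(ellipse a ∩ Metric.ball c ρ) ∨
        ellipse a ∩ Metric.ball c ρ = ellipse a) := by
  have ha2' : a ^ 2 ≤ 2 := (Real.le_sqrt' (by positivity)).1 ha2
  obtain ⟨hpq0, t, ht⟩ := hh q0
  rw [hq0] at hpq0 ht
  have hnormal : OnNormal a q0 p := ⟨t, ht⟩
  have hq0p : (q0 : ℝ²) ≠ p := fun heq => hpq0 (Subtype.ext heq).symm
  refine ⟨⟨fun q => by simp, fun q => dist_le_of_onNormal ha1 ha2' p.2 q0.2 hq0p hnormal q.2,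
    fun q hq => Subtype.ext (eq_of_isLocalMin_dist ha1 ha2' p.2 q0.2 hq0p hnormal hq),
    fun q hq => Subtype.ext (eq_of_isLocalMax_dist ha1 ha2' p.2 q0.2 hq0p hnormal hq)⟩,
    fun c ρ hc hne => ?_⟩
  by_cases hsub : ellipse a ⊆ ball c ρ
  · exact Or.inr (inter_eq_left.2 hsub)
  · exact Or.inl (contractibleSpace_inter_ball ha1 ha2' hc hne hsub)

end
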